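/- Let V = V₁ ⊕ V₂ be the Ω-orthogonal decomposition with V₁ = span(p₁, q₁) and V₂ = span(p₂, q₂), and let s₁ = {X ∈ sp(V) : X(V₁) ⊆ V₁ and X(V₂) ⊆ V₂} (so s₁ is isomorphic to sp(V₁) ⊕ sp(V₂) ≅ sl₂(R) ⊕ sl₂(R)). Then a Lie subalgebra h ⊆ s₁ has finite type if and only if both h ∩ {X ∈ s₁ : X(V₂) = 0} and h ∩ {X ∈ s₁ : X(V₁) = 0} have finite type. -/

import Mathlib

open Module

abbrev V4 : Type := Fin 4 → ℝ

noncomputable section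

def Om (u v : V4) : ℝ :=
  -(u 0 * v 2 - u 2 * v 0) - (u 1 * v 3 - u 3 * v 1)

def sp4 : Set (Module.End ℝ V4) :=
  {X | ∀ u v : V4, Om (X u) v + Om u (X v) = 0}

def pp1 : V4 := ![1,0,0,0]
def pp2 : V4 := ![0,1,0,0]
def qq1 : V4 := ![0,0,1,0]
def qq2 : V4 := ![0,0,0,1]

lemma Om_add_left (a b v : V4) : Om (a + b) v = Om a v + Om b v := by
  simp [Om]; ring
lemma Om_smul_left (c : ℝ) (a v : V4) : Om (c • a) v = c * Om a v := by
  simp [Om]; ring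
lemma Om_add_right (u a b : V4) : Om u (a + b) = Om u a + Om u b := by
  simp [Om]; ring
lemma Om_smul_right (c : ℝ) (u a : V4) : Om u (c • a) = c * Om u a := by
  simp [Om]; ring

def quad (u v : V4) : Module.End ℝ V4 where
  toFun w := Om u w • v + Om v w • u
  map_add' a b := by
    rw [Om_add_right, Om_add_right, add_smul, add_smul]; abel
  map_smul' c a := by
    rw [Om_smul_right, Om_smul_right, RingHom.id_apply, mul_smul, mul_smul, smul_add]

def InProl (h : Set (Module.End ℝ V4)) (k : ℕ)
    (T : MultilinearMap ℝ (fun _ : Fin (k+1) => V4) V4) : Prop :=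
  (∀ (σ : Equiv.Perm (Fin (k+1))) (v : Fin (k+1) → V4), (T fun i => v (σ i)) = T v) ∧
  (∀ v : Fin k → V4, ∃ A ∈ h, ∀ w : V4, A w = T (Fin.snoc v w))

def FiniteType (h : Set (Module.End ℝ V4)) : Prop :=
  ∃ k : ℕ, 1 ≤ k ∧
    ∀ T : MultilinearMap ℝ (fun _ : Fin (k+1) => V4) V4, InProl h k T → T = 0

/-- `V₁ = span(p₁,q₁)`. -/
def Vone : Submodule ℝ V4 := Submodule.span ℝ {pp1, qq1}

/-- `V₂ = span(p₂,q₂)`. -/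
def Vtwo : Submodule ℝ V4 := Submodule.span ℝ {pp2, qq2}

/-- `s₁ = {X ∈ sp(V) : X(V₁) ⊆ V₁ and X(V₂) ⊆ V₂}`. -/
def sOne : Set (Module.End ℝ V4) :=
  {X ∈ sp4 | (∀ w ∈ Vone, X w ∈ Vone) ∧ (∀ w ∈ Vtwo, X w ∈ Vtwo)}

/-! If `T` lies in the `k`-th prolongation of `h ⊆ s₁`, every partial map `T(v₁, …, v_k, ·)`
lies in `h` and so preserves `V₁` and `V₂`; by symmetry `T(u)` then lies in `V₁ ∩ V₂ = 0` as soon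
as one argument of `u` is in `V₁` and another in `V₂`. Expanding `T` multilinearly along
`V = V₁ ⊕ V₂` therefore leaves only its restrictions to `V₁` and to `V₂`, which lie in the
prolongations of `h ∩ {X(V₂) = 0}` and `h ∩ {X(V₁) = 0}`. As `h^(k) = 0` forces `h^(k+1) = 0`,
the larger of the two vanishing degrees works for `h`; the converse is monotonicity in `h`. -/

theorem MultilinearMap.eq_zero_of_isCompl {R M N ι : Type*} [CommRing R] [AddCommGroup M]
    [Module R M] [AddCommMonoid N] [Module R N] [Fintype ι] {p q : Submodule R M}
    (hpq : IsCompl p q) (f : MultilinearMap R (fun _ : ι => M) N)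
    (hp : f.compLinearMap (fun _ => p.projection q hpq) = 0)
    (hq : f.compLinearMap (fun _ => q.projection p hpq.symm) = 0)
    (hmixed : ∀ u i j, u i ∈ p → u j ∈ q → f u = 0) : f = 0 := by
  classical
  ext u
  have hu : u = (fun i => p.projection q hpq (u i)) + fun i => q.projection p hpq.symm (u i) :=
    funext fun i => (Submodule.projection_add_projection_eq_self hpq (u i)).symm
  rw [hu, f.map_add_univ, zero_apply]
  refine Finset.sum_eq_zero fun s _ => ?_
  rcases s.eq_empty_or_nonempty with rfl | ⟨i, hi⟩
  · simpa using congr($hq u)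
  by_cases hs : s = Finset.univ
  · subst hs
    simpa using congr($hp u)
  obtain ⟨j, hj⟩ : ∃ j, j ∉ s := by simpa [Finset.eq_univ_iff_forall] using hs
  exact hmixed _ i j (by simp [hi]) (by simp [hj])

/-- `h^(k) = 0`. -/
def ProlVanishes (h : Set (Module.End ℝ V4)) (k : ℕ) : Prop :=
  ∀ T : MultilinearMap ℝ (fun _ : Fin (k + 1) => V4) V4, InProl h k T → T = 0

section Prolongation

variable {h h' : Set (Module.End ℝ V4)} {k : ℕ}

theorem InProl.mono (hh : h ⊆ h') {T : MultilinearMap ℝ (fun _ : Fin (k + 1) => V4) V4}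
    (hT : InProl h k T) : InProl h' k T :=
  ⟨hT.1, fun v => let ⟨A, hA, hAT⟩ := hT.2 v; ⟨A, hh hA, hAT⟩⟩

theorem FiniteType.anti (hh : h' ⊆ h) (hf : FiniteType h) : FiniteType h' :=
  let ⟨k, hk, hT⟩ := hf
  ⟨k, hk, fun T hT' => hT T (hT'.mono hh)⟩

theorem InProl.curryLeft {T : MultilinearMap ℝ (fun _ : Fin (k + 2) => V4) V4}
    (hT : InProl h (k + 1) T) (u : V4) : InProl h k (T.curryLeft u) := by
  constructor
  · intro σ v
    rw [MultilinearMap.curryLeft_apply, MultilinearMap.curryLeft_apply,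
      ← hT.1 (Equiv.Perm.decomposeFin.symm (0, σ)) (Fin.cons u v)]
    congr 1
    ext m
    refine Fin.cases ?_ (fun m => ?_) m
    · simp
    · simp [Equiv.Perm.decomposeFin_symm_apply_succ]
  · intro v
    obtain ⟨A, hA, hAT⟩ := hT.2 (Fin.cons u v)
    refine ⟨A, hA, fun w => ?_⟩
    rw [hAT, MultilinearMap.curryLeft_apply, Fin.cons_snoc_eq_snoc_cons]

theorem ProlVanishes.succ (hk : ProlVanishes h k) : ProlVanishes h (k + 1) := fun T hT =>
  MultilinearMap.ext fun v => by
    rw [← Fin.cons_self_tail v, ← T.curryLeft_apply, hk _ (hT.curryLeft (v 0))]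
    rfl

theorem ProlVanishes.mono (hk : ProlVanishes h k) {m : ℕ} (hkm : k ≤ m) : ProlVanishes h m :=
  Nat.le_induction hk (fun _ _ => succ) m hkm

variable {P Q : Submodule ℝ V4} {T : MultilinearMap ℝ (fun _ : Fin (k + 1) => V4) V4}

theorem InProl.apply_mem (hP : ∀ A ∈ h, ∀ w ∈ P, A w ∈ P) (hT : InProl h k T)
    {u : Fin (k + 1) → V4} {i : Fin (k + 1)} (hi : u i ∈ P) : T u ∈ P := by
  set u' : Fin (k + 1) → V4 := fun m => u (Equiv.swap i (Fin.last k) m)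
  obtain ⟨A, hA, hAT⟩ := hT.2 (Fin.init u')
  have hTu : T u = A (u' (Fin.last k)) := by rw [hAT, Fin.snoc_init_self, hT.1]
  have hlast : u' (Fin.last k) = u i := by simp [u']
  exact hTu ▸ hlast ▸ hP A hA _ hi

theorem InProl.apply_eq_zero_of_disjoint (hPQ : Disjoint P Q)
    (hP : ∀ A ∈ h, ∀ w ∈ P, A w ∈ P) (hQ : ∀ A ∈ h, ∀ w ∈ Q, A w ∈ Q) (hT : InProl h k T)
    {u : Fin (k + 1) → V4} {i j : Fin (k + 1)} (hi : u i ∈ P) (hj : u j ∈ Q) : T u = 0 :=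
  Submodule.disjoint_def.1 hPQ _ (hT.apply_mem hP hi) (hT.apply_mem hQ hj)

theorem InProl.compLinearMap_projection (hPQ : IsCompl P Q)
    (hP : ∀ A ∈ h, ∀ w ∈ P, A w ∈ P) (hQ : ∀ A ∈ h, ∀ w ∈ Q, A w ∈ Q) (hk : 1 ≤ k)
    (hT : InProl h k T) :
    InProl (h ∩ {X | ∀ w ∈ Q, X w = 0}) k (T.compLinearMap fun _ => P.projection Q hPQ) := by
  set π := P.projection Q hPQ
  refine ⟨fun σ v => hT.1 σ (fun i => π (v i)), fun v => ?_⟩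
  obtain ⟨A, hA, hAT⟩ := hT.2 (fun i => π (v i))
  have hAQ : ∀ w ∈ Q, A w = 0 := fun w hw => by
    rw [hAT]
    exact hT.apply_eq_zero_of_disjoint hPQ.disjoint hP hQ (i := Fin.castSucc ⟨0, hk⟩)
      (j := Fin.last k) (by rw [Fin.snoc_castSucc]; exact Submodule.projection_apply_mem _ _)
      (by rwa [Fin.snoc_last])
  refine ⟨A, ⟨hA, hAQ⟩, fun w => ?_⟩
  -- `A` kills the `Q`-component of `w`
  have hAw : A w = A (π w) := by
    rw [← sub_eq_zero, ← map_sub, hAQ]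
    rw [← Submodule.projection_eq_self_sub_projection hPQ]
    exact Submodule.projection_apply_mem _ _
  rw [hAw, hAT, MultilinearMap.compLinearMap_apply]
  exact congrArg T (Fin.comp_snoc π v w).symm

theorem finiteType_iff_of_isCompl (hPQ : IsCompl P Q)
    (hP : ∀ A ∈ h, ∀ w ∈ P, A w ∈ P) (hQ : ∀ A ∈ h, ∀ w ∈ Q, A w ∈ Q) :
    FiniteType h ↔ FiniteType (h ∩ {X | ∀ w ∈ Q, X w = 0}) ∧
      FiniteType (h ∩ {X | ∀ w ∈ P, X w = 0}) := by
  refine ⟨fun hf => ⟨hf.anti Set.inter_subset_left, hf.anti Set.inter_subset_left⟩, ?_⟩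
  rintro ⟨⟨k₁, hk₁, hP₁⟩, ⟨k₂, hk₂, hQ₂⟩⟩
  have hk : 1 ≤ max k₁ k₂ := hk₁.trans (le_max_left _ _)
  refine ⟨max k₁ k₂, hk, fun T hT => T.eq_zero_of_isCompl hPQ ?_ ?_ ?_⟩
  · exact ProlVanishes.mono hP₁ (le_max_left _ _) _ (hT.compLinearMap_projection hPQ hP hQ hk)
  · exact ProlVanishes.mono hQ₂ (le_max_right _ _) _
      (hT.compLinearMap_projection hPQ.symm hQ hP hk)
  · exact fun u i j hi hj => hT.apply_eq_zero_of_disjoint hPQ.disjoint hP hQ hi hj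

end Prolongation

theorem isCompl_Vone_Vtwo : IsCompl Vone Vtwo := by
  constructor
  · rw [Submodule.disjoint_def]
    intro x hx₁ hx₂
    obtain ⟨a, b, rfl⟩ := Submodule.mem_span_pair.1 hx₁
    obtain ⟨c, d, hcd⟩ := Submodule.mem_span_pair.1 hx₂
    have h0 := congrFun hcd 0
    have h2 := congrFun hcd 2
    simp [pp1, pp2, qq1, qq2] at h0 h2
    simp [← h0, ← h2]
  · rw [codisjoint_iff, eq_top_iff]
    intro v _
    refine Submodule.mem_sup.2 ⟨v 0 • pp1 + v 2 • qq1, Submodule.mem_span_pair.2 ⟨_, _, rfl⟩,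
      v 1 • pp2 + v 3 • qq2, Submodule.mem_span_pair.2 ⟨_, _, rfl⟩, ?_⟩
    ext i
    fin_cases i <;> simp [pp1, pp2, qq1, qq2]

attribute [local instance] LieRing.ofAssociativeRing

/-- a subalgebra `h ⊆ s₁` has finite type iff both
`h ∩ {X ∈ s₁ : X(V₂) = 0}` and `h ∩ {X ∈ s₁ : X(V₁) = 0}` have finite type. -/
theorem finite_type_in_s1_iff
    (h : LieSubalgebra ℝ (Module.End ℝ V4))
    (hsub : (h : Set (Module.End ℝ V4)) ⊆ sOne) :
    FiniteType (h : Set (Module.End ℝ V4)) ↔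
      (FiniteType ((h : Set (Module.End ℝ V4)) ∩ {X ∈ sOne | ∀ w ∈ Vtwo, X w = 0}) ∧
       FiniteType ((h : Set (Module.End ℝ V4)) ∩ {X ∈ sOne | ∀ w ∈ Vone, X w = 0})) := by
  have hsOne (W : Submodule ℝ V4) :
      (h : Set (Module.End ℝ V4)) ∩ {X ∈ sOne | ∀ w ∈ W, X w = 0} =
        (h : Set (Module.End ℝ V4)) ∩ {X | ∀ w ∈ W, X w = 0} :=
    Set.ext fun _ => ⟨fun ⟨hX, _, hW⟩ => ⟨hX, hW⟩, fun ⟨hX, hW⟩ => ⟨hX, hsub hX, hW⟩⟩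
  rw [hsOne, hsOne]
  exact finiteType_iff_of_isCompl isCompl_Vone_Vtwo (fun A hA => (hsub hA).2.1)
    (fun A hA => (hsub hA).2.2)
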